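/- Let P(t) be a real polynomial in n variables whose Newton diagram has corner points v₁,…,v_r with associated cones S(1),…,S(r) (where S(j) = nonnegative-rational-cone spanned by the normal vectors of the faces meeting at v_j, intersected with ℕⁿ). Then ∪_{j=1}^r S(j) = ℕⁿ, i.e., every lattice point q ∈ ℕⁿ lies in at least one cone S(j). -/

import Mathlib

/-!
Order the points of `Λ` by their `q`-weight `q ⬝ᵥ v`, breaking ties lexicographically. This is
the order induced by an injective linear map into a lexicographically ordered vector space, and a
point minimising such a map on a set `s` is an extreme point of `convexHull s`: the preimage of
the upper ray at the minimum is convex, and the minimum of a linear order cannot lie strictly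
inside a segment. On `Λ + ℝ₊ⁿ` the key is still minimised at the minimum `v₀` over `Λ`,
because the key of a nonnegative vector is nonnegative when `q ≥ 0`. So `v₀` is a corner of the
Newton diagram, and it minimises `q` on `Λ`.
-/

open Pointwise

instance Pi.Lex.posSMulStrictMono {ι 𝕜 β : Type*} [LinearOrder ι] [Zero 𝕜] [Preorder 𝕜]
    [PartialOrder β] [SMul 𝕜 β] [PosSMulStrictMono 𝕜 β] :
    PosSMulStrictMono 𝕜 (Lex (ι → β)) where
  smul_lt_smul_of_pos_left c hc x y := by
    rintro ⟨i, hlt, hi⟩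
    exact ⟨i, fun j hj => congrArg (c • ·) (hlt j hj), smul_lt_smul_of_pos_left hi hc⟩

section LinearOrderedModule

variable {𝕜 G : Type*} [Field 𝕜] [LinearOrder 𝕜] [IsStrictOrderedRing 𝕜]
  [AddCommGroup G] [LinearOrder G] [IsOrderedAddMonoid G] [Module 𝕜 G] [PosSMulStrictMono 𝕜 G]

theorem eq_of_mem_openSegment_of_le_of_le {a b c : G} (h : c ∈ openSegment 𝕜 a b)
    (ha : c ≤ a) (hb : c ≤ b) : a = c := by
  rcases lt_trichotomy a b with hab | rfl | hab
  · exact absurd (openSegment_subset_Ioo hab h).1 ha.not_gt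
  · rw [openSegment_same] at h
    exact h.symm
  · rw [openSegment_symm] at h
    exact absurd (openSegment_subset_Ioo hab h).1 hb.not_gt

theorem mem_extremePoints_convexHull_of_forall_le {E : Type*} [AddCommGroup E] [Module 𝕜 E]
    (φ : E →ₗ[𝕜] G) (hφ : Function.Injective φ) {s : Set E} {x : E} (hx : x ∈ s)
    (hle : ∀ y ∈ s, φ x ≤ φ y) : x ∈ (convexHull 𝕜 s).extremePoints 𝕜 := by
  have hhull : convexHull 𝕜 s ⊆ φ ⁻¹' Set.Ici (φ x) :=
    convexHull_min hle ((convex_Ici _).linear_preimage φ)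
  refine ⟨subset_convexHull 𝕜 s hx, fun y hy z hz hxyz => hφ ?_⟩
  have hseg : φ x ∈ openSegment 𝕜 (φ y) (φ z) := by
    rw [← LinearMap.coe_toAffineMap, ← image_openSegment]
    exact Set.mem_image_of_mem _ hxyz
  exact eq_of_mem_openSegment_of_le_of_le hseg (hhull hy) (hhull hz)

end LinearOrderedModule

variable {n : ℕ}

/-- `x ↦ (q ⬝ᵥ x, x₀, …, xₙ₋₁)`, ordered lexicographically. -/
def weightedLexKey (q : Fin n → ℝ) : (Fin n → ℝ) →ₗ[ℝ] Lex (Fin (n + 1) → ℝ) :=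
  (toLexLinearEquiv ℝ (Fin (n + 1) → ℝ)).toLinearMap ∘ₗ
    LinearMap.pi (Fin.cons (dotProductBilin ℝ ℝ q) LinearMap.proj)

@[simp]
theorem weightedLexKey_zero (q x : Fin n → ℝ) : weightedLexKey q x 0 = q ⬝ᵥ x := by
  simp [weightedLexKey]

@[simp]
theorem weightedLexKey_succ (q x : Fin n → ℝ) (i : Fin n) :
    weightedLexKey q x i.succ = x i := by
  simp [weightedLexKey]

theorem weightedLexKey_injective (q : Fin n → ℝ) : Function.Injective (weightedLexKey q) :=
  fun x y h => funext fun i => by simpa using congrFun h i.succ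

theorem weightedLexKey_nonneg {q x : Fin n → ℝ} (hq : 0 ≤ q) (hx : 0 ≤ x) :
    0 ≤ weightedLexKey q x :=
  Pi.toLex_monotone <|
    Fin.cases (by simpa using dotProduct_nonneg_of_nonneg hq hx) fun i => by simpa using hx i

def newtonDiagram (Λ : Set (Fin n → ℝ)) : Set (Fin n → ℝ) :=
  convexHull ℝ (Λ + Set.Ici 0)

theorem exists_mem_extremePoints_newtonDiagram_forall_dotProduct_le (Λ : Finset (Fin n → ℝ))
    (hΛ : Λ.Nonempty) {q : Fin n → ℝ} (hq : 0 ≤ q) :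
    ∃ v₀ ∈ Λ, v₀ ∈ (newtonDiagram Λ).extremePoints ℝ ∧ ∀ v ∈ Λ, q ⬝ᵥ v₀ ≤ q ⬝ᵥ v := by
  obtain ⟨v₀, hv₀, hmin⟩ := Λ.exists_min_image (weightedLexKey q) hΛ
  refine ⟨v₀, hv₀, mem_extremePoints_convexHull_of_forall_le _ (weightedLexKey_injective q)
    ⟨v₀, hv₀, 0, Set.mem_Ici.2 le_rfl, add_zero v₀⟩ ?_, fun v hv => ?_⟩
  · rintro _ ⟨v, hv, r, hr, rfl⟩
    calc weightedLexKey q v₀ ≤ weightedLexKey q v := hmin v hv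
      _ ≤ weightedLexKey q v + weightedLexKey q r :=
        le_add_of_nonneg_right (weightedLexKey_nonneg hq hr)
      _ = weightedLexKey q (v + r) := (map_add _ _ _).symm
  · simpa using Pi.apply_le_of_toLex (i := 0) (hmin v hv) fun j hj =>
      absurd hj (Fin.not_lt_zero j)

theorem stmt12_general (n : ℕ) (Λ : Finset (Fin n → ℝ)) (hne : Λ.Nonempty) :
    ∀ q : Fin n → ℕ, ∃ vj ∈ Λ,
      vj ∈ Set.extremePoints ℝ
        (convexHull ℝ ((↑Λ : Set (Fin n → ℝ)) + {x : Fin n → ℝ | ∀ i, 0 ≤ x i})) ∧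
      ∀ v ∈ Λ, 0 ≤ ∑ i, (q i : ℝ) * (v i - vj i) := by
  intro q
  obtain ⟨v₀, hv₀, hext, hmin⟩ :=
    exists_mem_extremePoints_newtonDiagram_forall_dotProduct_le Λ hne
      (q := fun i => (q i : ℝ)) fun i => Nat.cast_nonneg _
  refine ⟨v₀, hv₀, hext, fun v hv => ?_⟩
  simpa [mul_sub, dotProduct] using hmin v hv

/-- Covering property `∪_j S(j) = ℕⁿ`: every `q ∈ ℕⁿ` lies in the (closed normal)
cone of some corner point `v_j` of the Newton diagram of `P`, i.e. there is a corner
point `v_j ∈ Λ` (an extreme point of `conv(Λ + ℝ₊ⁿ)`) with `q·(v − v_j) ≥ 0` for all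
`v ∈ Λ`. -/
theorem stmt12 (n : ℕ) (Λ : Finset (Fin n → ℝ)) (hne : Λ.Nonempty)
    (hΛnat : ∀ v ∈ Λ, ∀ i, ∃ m : ℕ, v i = m) :
    ∀ q : Fin n → ℕ, ∃ vj ∈ Λ,
      vj ∈ Set.extremePoints ℝ
        (convexHull ℝ ((↑Λ : Set (Fin n → ℝ)) + {x : Fin n → ℝ | ∀ i, 0 ≤ x i})) ∧
      ∀ v ∈ Λ, 0 ≤ ∑ i, (q i : ℝ) * (v i - vj i) :=
  stmt12_general n Λ hne
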